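/- Let c : ℝ³ → ℝ be measurable with 0 < c_min ≤ c(x) ≤ c_max, and for s ∈ ℂ with Re(s) = σ > 0 define the sesquilinear form 𝔹[φ,ψ] = ∫ ∇φ·∇ψ̄ dx + s² ∫ φψ̄/c² dx on H¹(ℝ³). Then Re(𝔹[φ, sφ]) ≥ C min{σ, σ³} ‖φ‖²_{H¹(ℝ³)} for all φ ∈ H¹(ℝ³), where C > 0 depends only on c_max. -/
import Mathlib


open MeasureTheory

/-- coercivity of the rotated sesquilinear form of the
Laplace-transformed wave equation:
`Re 𝔹[φ, sφ] ≥ C min{σ,σ³} ‖φ‖²_{H¹}`, with `C > 0` depending only on `c_max`. -/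
theorem laplace_form_coercivity (cmax : ℝ) (hcmax : 0 < cmax) :
    ∃ C > (0:ℝ), ∀ (c : (Fin 3 → ℝ) → ℝ) (cmin σ : ℝ) (s : ℂ)
      (φ : (Fin 3 → ℝ) → ℂ) (g : (Fin 3 → ℝ) → Fin 3 → ℂ),
      0 < cmin → (∀ x, cmin ≤ c x ∧ c x ≤ cmax) → 0 < σ → s.re = σ →
      Differentiable ℝ φ →
      (∀ x i, g x i = fderiv ℝ φ x (Pi.single i 1)) →
      Integrable (fun x => ‖φ x‖ ^ 2) →
      Integrable (fun x => ∑ i, ‖g x i‖ ^ 2) →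
      Integrable (fun x => ∑ i, g x i * (starRingEnd ℂ) (s * g x i)) →
      Integrable (fun x => φ x * (starRingEnd ℂ) (s * φ x) / ((c x : ℂ)) ^ 2) →
      C * min σ (σ ^ 3) * ((∫ x, ‖φ x‖ ^ 2) + ∫ x, ∑ i, ‖g x i‖ ^ 2) ≤
        ((∫ x, ∑ i, g x i * (starRingEnd ℂ) (s * g x i)) +
          s ^ 2 * ∫ x, φ x * (starRingEnd ℂ) (s * φ x) / ((c x : ℂ)) ^ 2).re := by
  refine ⟨(1 + cmax ^ 2)⁻¹, by positivity, ?_⟩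
  intro c cmin σ s φ g hcmin hc hσ hs hφd hgdef hPint hGint hAint hBint
  have hs0 : s ≠ 0 := fun h => by simp [h] at hs; linarith
  set P := ∫ x, ‖φ x‖ ^ 2 with hPdef
  set G := ∫ x, ∑ i, ‖g x i‖ ^ 2 with hGdef
  have hcx : ∀ x, 0 < c x := fun x => lt_of_lt_of_le hcmin (hc x).1
  -- first integral
  have hA : (∫ x, ∑ i, g x i * (starRingEnd ℂ) (s * g x i))
      = (starRingEnd ℂ) s * (G : ℂ) := by
    have h1 : ∀ x, (∑ i, g x i * (starRingEnd ℂ) (s * g x i))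
        = (starRingEnd ℂ) s * ((∑ i, ‖g x i‖ ^ 2 : ℝ) : ℂ) := by
      intro x
      push_cast
      rw [Finset.mul_sum]
      refine Finset.sum_congr rfl fun i _ => ?_
      rw [map_mul, mul_comm ((starRingEnd ℂ) s), ← mul_assoc, Complex.mul_conj']
      push_cast
      ring
    rw [MeasureTheory.integral_congr_ae (Filter.Eventually.of_forall h1),
      MeasureTheory.integral_const_mul]
    congr 1
    exact integral_ofReal
  -- second integral
  set fQ : (Fin 3 → ℝ) → ℝ := fun x => ‖φ x‖ ^ 2 / (c x) ^ 2 with hfQdef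
  have h2 : ∀ x, φ x * (starRingEnd ℂ) (s * φ x) / ((c x : ℂ)) ^ 2
      = (starRingEnd ℂ) s * ((fQ x : ℝ) : ℂ) := by
    intro x
    have hcx0 : (c x : ℂ) ≠ 0 := by
      exact_mod_cast (hcx x).ne'
    rw [map_mul, hfQdef]
    push_cast
    rw [mul_comm ((starRingEnd ℂ) s), ← mul_assoc]
    rw [Complex.mul_conj']
    push_cast
    field_simp
  have hB : (∫ x, φ x * (starRingEnd ℂ) (s * φ x) / ((c x : ℂ)) ^ 2)
      = (starRingEnd ℂ) s * ((∫ x, fQ x : ℝ) : ℂ) := by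
    rw [MeasureTheory.integral_congr_ae (Filter.Eventually.of_forall h2),
      MeasureTheory.integral_const_mul]
    congr 1
    exact integral_ofReal
  set Q := ∫ x, fQ x with hQdef
  -- integrability of fQ
  have hfQint : Integrable fQ := by
    have h3 : Integrable (fun x => (((starRingEnd ℂ) s)⁻¹ *
        (φ x * (starRingEnd ℂ) (s * φ x) / ((c x : ℂ)) ^ 2)).re) :=
      (hBint.const_mul _).re
    have hcs0 : (starRingEnd ℂ) s ≠ 0 := by simpa using hs0
    refine h3.congr (Filter.Eventually.of_forall fun x => ?_)
    show (((starRingEnd ℂ) s)⁻¹ * (φ x * (starRingEnd ℂ) (s * φ x) / ((c x : ℂ)) ^ 2)).re = fQ x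
    rw [h2 x, ← mul_assoc, inv_mul_cancel₀ hcs0, one_mul, Complex.ofReal_re]
  -- nonnegativity and comparisons
  have hP0 : 0 ≤ P := integral_nonneg fun x => by positivity
  have hG0 : 0 ≤ G := integral_nonneg fun x => Finset.sum_nonneg fun i _ => by positivity
  have hQ0 : 0 ≤ Q := integral_nonneg fun x => by have := hcx x; positivity
  have hQP : P / cmax ^ 2 ≤ Q := by
    rw [hPdef, hQdef, ← MeasureTheory.integral_div]
    refine integral_mono (hPint.div_const _) hfQint fun x => ?_
    exact div_le_div_of_nonneg_left (by positivity) (by have := hcx x; positivity)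
      (by nlinarith [(hc x).2, hcx x])
  -- rewrite the RHS
  rw [hA, hB]
  have hsc : s ^ 2 * ((starRingEnd ℂ) s * (Q : ℂ)) = (Complex.normSq s : ℂ) * s * (Q : ℂ) := by
    rw [← Complex.mul_conj]; ring
  rw [hsc]
  have hre : ((starRingEnd ℂ) s * (G : ℂ) + (Complex.normSq s : ℂ) * s * (Q : ℂ)).re
      = σ * G + Complex.normSq s * σ * Q := by
    simp [Complex.add_re, Complex.mul_re, hs]
  rw [hre]
  -- the elementary inequality
  have hm1 : min σ (σ ^ 3) ≤ σ := min_le_left _ _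
  have hm2 : min σ (σ ^ 3) ≤ σ ^ 3 := min_le_right _ _
  have hm0 : 0 ≤ min σ (σ ^ 3) := le_min hσ.le (by positivity)
  have hC1 : (1 + cmax ^ 2)⁻¹ ≤ 1 := by
    rw [inv_le_one_iff₀]; right; nlinarith
  have hC2 : (1 + cmax ^ 2)⁻¹ ≤ (cmax ^ 2)⁻¹ := by
    apply inv_anti₀ (by positivity); linarith
  have hns : σ ^ 2 ≤ Complex.normSq s := by
    rw [Complex.normSq_apply, hs]; nlinarith [sq_nonneg s.im]
  have h1 : (1 + cmax ^ 2)⁻¹ * min σ (σ ^ 3) * G ≤ σ * G := by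
    refine mul_le_mul_of_nonneg_right ?_ hG0
    calc (1 + cmax ^ 2)⁻¹ * min σ (σ ^ 3) ≤ 1 * min σ (σ ^ 3) :=
          mul_le_mul_of_nonneg_right hC1 hm0
      _ = min σ (σ ^ 3) := one_mul _
      _ ≤ σ := hm1
  have step1 : σ ^ 3 * Q ≤ Complex.normSq s * σ * Q := by
    refine mul_le_mul_of_nonneg_right ?_ hQ0
    nlinarith
  have step2 : σ ^ 3 * (P / cmax ^ 2) ≤ σ ^ 3 * Q :=
    mul_le_mul_of_nonneg_left hQP (by positivity)
  have step3 : (1 + cmax ^ 2)⁻¹ * min σ (σ ^ 3) * P ≤ σ ^ 3 * (P / cmax ^ 2) := by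
    have : (1 + cmax ^ 2)⁻¹ * min σ (σ ^ 3) ≤ (cmax ^ 2)⁻¹ * σ ^ 3 :=
      mul_le_mul hC2 hm2 hm0 (by positivity)
    calc (1 + cmax ^ 2)⁻¹ * min σ (σ ^ 3) * P ≤ (cmax ^ 2)⁻¹ * σ ^ 3 * P :=
          mul_le_mul_of_nonneg_right this hP0
      _ = σ ^ 3 * (P / cmax ^ 2) := by ring
  nlinarith [h1, step1, step2, step3]
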